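/- arXiv:2505.21626 — 2 statements merged into one kernel-verified Lean document; each statement's English description precedes it below -/
import Mathlib

section
/- Let U and Y be real separable Hilbert spaces and G1, G2 : U → Y Lipschitz maps with C = Lip(G1) + Lip(G2). For any probability measures μ, μ' on U with finite second moments, E_{u'∼μ'}‖G1(u') − G2(u')‖² ≤ E_{u∼μ}‖G1(u) − G2(u)‖² + C·√(4C²(m₂(μ) + m₂(μ')) + 16‖G1(0)‖² + 16‖G2(0)‖²) · W2(μ, μ'), where m₂(ν) = E_{u∼ν}‖u‖² and W2 is the 2-Wasserstein distance. -/
/-!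
Write `H = G1 - G2`, a `C`-Lipschitz map, and `F = ‖H‖²`. For any coupling `γ` of `μ` and `μ'`,
`F v - F u = (‖H u‖ + ‖H v‖)(‖H v‖ - ‖H u‖) ≤ C · w(u, v) · ‖u - v‖` with the affine weight
`w(u, v) = 2‖H 0‖ + C(‖u‖ + ‖v‖)`. Integrating against `γ` and applying Cauchy–Schwarz bounds
`E_{μ'} F - E_μ F` by `C ‖w‖_{L²(γ)} ‖u - v‖_{L²(γ)}`, where `‖w‖²_{L²(γ)}` is controlled by the
second moments of the marginals. Finite second moments make every coupling have finite cost, so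
taking the infimum over couplings gives the bound with `W₂(μ, μ')`.
-/

open MeasureTheory

/-- The 2-Wasserstein distance, defined as the square root of the infimum of
`∫ d(x,y)² dγ` over couplings `γ` of `μ` and `ν`. -/
noncomputable def wasserstein2 {X : Type*} [MeasurableSpace X] [PseudoEMetricSpace X]
    (μ ν : Measure X) : ℝ :=
  Real.sqrt
    (⨅ γ ∈ {γ : Measure (X × X) |
        γ.map Prod.fst = μ ∧ γ.map Prod.snd = ν},
      ∫⁻ z, edist z.1 z.2 ^ 2 ∂γ).toReal

open scoped NNReal ENNReal

section Lipschitz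

variable {E F : Type*} [SeminormedAddCommGroup E] [SeminormedAddCommGroup F]

lemma sq_norm_sub_sq_norm_le (a b : F) : ‖b‖ ^ 2 - ‖a‖ ^ 2 ≤ (‖a‖ + ‖b‖) * ‖b - a‖ :=
  calc ‖b‖ ^ 2 - ‖a‖ ^ 2 = (‖a‖ + ‖b‖) * (‖b‖ - ‖a‖) := by ring
    _ ≤ (‖a‖ + ‖b‖) * ‖b - a‖ := by gcongr; exact norm_sub_norm_le b a

variable {f : E → F} {K : ℝ≥0}

lemma LipschitzWith.norm_le_norm_zero_add (hf : LipschitzWith K f) (x : E) :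
    ‖f x‖ ≤ ‖f 0‖ + K * ‖x‖ := by
  have h := hf.norm_sub_le x 0
  rw [sub_zero] at h
  linarith [norm_le_norm_add_norm_sub' (f x) (f 0)]

lemma LipschitzWith.sq_norm_le (hf : LipschitzWith K f) (x : E) :
    ‖f x‖ ^ 2 ≤ 2 * ‖f 0‖ ^ 2 + 2 * K ^ 2 * ‖x‖ ^ 2 := by
  have h := hf.norm_le_norm_zero_add x
  nlinarith [norm_nonneg (f x), sq_nonneg (‖f 0‖ - K * ‖x‖)]

lemma LipschitzWith.sq_norm_sub_sq_norm_le (hf : LipschitzWith K f) (x y : E) :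
    ‖f y‖ ^ 2 - ‖f x‖ ^ 2 ≤ K * ((2 * ‖f 0‖ + K * (‖x‖ + ‖y‖)) * ‖x - y‖) :=
  calc ‖f y‖ ^ 2 - ‖f x‖ ^ 2 ≤ (‖f x‖ + ‖f y‖) * ‖f y - f x‖ :=
        _root_.sq_norm_sub_sq_norm_le _ _
    _ ≤ (2 * ‖f 0‖ + K * (‖x‖ + ‖y‖)) * (K * ‖x - y‖) := by
        gcongr ?_ * ?_
        · linarith [hf.norm_le_norm_zero_add x, hf.norm_le_norm_zero_add y]
        · rw [norm_sub_rev x y]; exact hf.norm_sub_le y x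
    _ = K * ((2 * ‖f 0‖ + K * (‖x‖ + ‖y‖)) * ‖x - y‖) := by ring

lemma LipschitzWith.integrable_sq_norm_comp [MeasurableSpace E] [OpensMeasurableSpace E]
    {μ : Measure E} [IsFiniteMeasure μ] (hf : LipschitzWith K f)
    (hμ : Integrable (fun x => ‖x‖ ^ 2) μ) :
    Integrable (fun x => ‖f x‖ ^ 2) μ := by
  refine Integrable.mono' ((integrable_const (2 * ‖f 0‖ ^ 2)).add (hμ.const_mul (2 * K ^ 2)))
    (hf.continuous.norm.pow 2).aestronglyMeasurable (ae_of_all _ fun x => ?_)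
  rw [Real.norm_of_nonneg (by positivity)]
  exact hf.sq_norm_le x

end Lipschitz

lemma integral_mul_le_sqrt_mul_sqrt {α : Type*} [MeasurableSpace α] {μ : Measure α}
    {f g : α → ℝ} (hf₀ : 0 ≤ᵐ[μ] f) (hg₀ : 0 ≤ᵐ[μ] g) (hf : MemLp f 2 μ) (hg : MemLp g 2 μ) :
    ∫ a, f a * g a ∂μ ≤ √(∫ a, f a ^ 2 ∂μ) * √(∫ a, g a ^ 2 ∂μ) := by
  have h := integral_mul_le_Lp_mul_Lq_of_nonneg Real.HolderConjugate.two_two hf₀ hg₀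
    (by simpa using hf) (by simpa using hg)
  simpa only [Real.rpow_two, ← Real.sqrt_eq_rpow] using h

section Marginals

variable {X G : Type*} [MeasurableSpace X] [NormedAddCommGroup G]
  {μ ν : Measure X} {γ : Measure (X × X)} {g : X → G}

lemma integral_comp_fst_of_map_fst [NormedSpace ℝ G] (hfst : γ.map Prod.fst = μ)
    (hg : AEStronglyMeasurable g μ) : ∫ z, g z.1 ∂γ = ∫ x, g x ∂μ := by
  subst hfst; exact (integral_map measurable_fst.aemeasurable hg).symm

lemma integral_comp_snd_of_map_snd [NormedSpace ℝ G] (hsnd : γ.map Prod.snd = ν)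
    (hg : AEStronglyMeasurable g ν) : ∫ z, g z.2 ∂γ = ∫ x, g x ∂ν := by
  subst hsnd; exact (integral_map measurable_snd.aemeasurable hg).symm

lemma MeasureTheory.Integrable.comp_fst_of_map_fst (hfst : γ.map Prod.fst = μ)
    (hg : Integrable g μ) : Integrable (fun z => g z.1) γ := by
  subst hfst; exact hg.comp_measurable measurable_fst

lemma MeasureTheory.Integrable.comp_snd_of_map_snd (hsnd : γ.map Prod.snd = ν)
    (hg : Integrable g ν) : Integrable (fun z => g z.2) γ := by
  subst hsnd; exact hg.comp_measurable measurable_snd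

end Marginals

section Coupling

variable {E F : Type*} [NormedAddCommGroup E] [MeasurableSpace E] [SeminormedAddCommGroup F]
  {μ ν : Measure E} {γ : Measure (E × E)}
  (hfst : γ.map Prod.fst = μ) (hsnd : γ.map Prod.snd = ν)
  (hμ : Integrable (fun x => ‖x‖ ^ 2) μ) (hν : Integrable (fun x => ‖x‖ ^ 2) ν)
include hfst hsnd hμ hν

lemma integral_sq_affine_norm_le [IsProbabilityMeasure γ] (a b : ℝ) :
    ∫ z, (2 * a + b * (‖z.1‖ + ‖z.2‖)) ^ 2 ∂γ ≤
      4 * b ^ 2 * (∫ x, ‖x‖ ^ 2 ∂μ + ∫ x, ‖x‖ ^ 2 ∂ν) + 8 * a ^ 2 := by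
  have h₁ : Integrable (fun z : E × E => ‖z.1‖ ^ 2) γ := hμ.comp_fst_of_map_fst hfst
  have h₂ : Integrable (fun z : E × E => ‖z.2‖ ^ 2) γ := hν.comp_snd_of_map_snd hsnd
  have h₁₂ : Integrable (fun z : E × E => 4 * b ^ 2 * (‖z.1‖ ^ 2 + ‖z.2‖ ^ 2)) γ :=
    (h₁.add h₂).const_mul _
  calc ∫ z, (2 * a + b * (‖z.1‖ + ‖z.2‖)) ^ 2 ∂γ
      ≤ ∫ z, (4 * b ^ 2 * (‖z.1‖ ^ 2 + ‖z.2‖ ^ 2) + 8 * a ^ 2) ∂γ := by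
        refine integral_mono_of_nonneg (ae_of_all _ fun z => sq_nonneg _)
          (h₁₂.add (integrable_const _)) (ae_of_all _ fun z => ?_)
        nlinarith [sq_nonneg (2 * a - b * (‖z.1‖ + ‖z.2‖)),
          mul_nonneg (sq_nonneg b) (sq_nonneg (‖z.1‖ - ‖z.2‖))]
    _ = 4 * b ^ 2 * (∫ z, ‖z.1‖ ^ 2 ∂γ + ∫ z, ‖z.2‖ ^ 2 ∂γ) + 8 * a ^ 2 := by
        rw [integral_add h₁₂ (integrable_const _), integral_const_mul, integral_add h₁ h₂,
          integral_const, probReal_univ, one_smul]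
    _ = 4 * b ^ 2 * (∫ x, ‖x‖ ^ 2 ∂μ + ∫ x, ‖x‖ ^ 2 ∂ν) + 8 * a ^ 2 := by
        rw [integral_comp_fst_of_map_fst hfst hμ.1, integral_comp_snd_of_map_snd hsnd hν.1]

variable [OpensMeasurableSpace E] [SecondCountableTopology E]

lemma integrable_dist_sq_of_coupling : Integrable (fun z : E × E => dist z.1 z.2 ^ 2) γ := by
  have h₁ : MemLp (fun z : E × E => z.1) 2 γ :=
    (memLp_two_iff_integrable_sq_norm measurable_fst.aestronglyMeasurable).2
      (hμ.comp_fst_of_map_fst hfst)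
  have h₂ : MemLp (fun z : E × E => z.2) 2 γ :=
    (memLp_two_iff_integrable_sq_norm measurable_snd.aestronglyMeasurable).2
      (hν.comp_snd_of_map_snd hsnd)
  simpa only [dist_eq_norm, Pi.sub_apply] using
    (memLp_two_iff_integrable_sq_norm (h₁.sub h₂).aestronglyMeasurable).1 (h₁.sub h₂)

theorem LipschitzWith.integral_sq_norm_sub_le_of_coupling [IsProbabilityMeasure μ]
    {f : E → F} {K : ℝ≥0} (hf : LipschitzWith K f) :
    ∫ x, ‖f x‖ ^ 2 ∂ν - ∫ x, ‖f x‖ ^ 2 ∂μ ≤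
      K * √(4 * K ^ 2 * (∫ x, ‖x‖ ^ 2 ∂μ + ∫ x, ‖x‖ ^ 2 ∂ν) + 8 * ‖f 0‖ ^ 2) *
        √(∫ z, dist z.1 z.2 ^ 2 ∂γ) := by
  have : IsProbabilityMeasure γ := by
    subst hfst; exact Measure.isProbabilityMeasure_of_map Prod.fst
  have : IsProbabilityMeasure ν :=
    hsnd ▸ Measure.isProbabilityMeasure_map measurable_snd.aemeasurable
  set w : E × E → ℝ := fun z => 2 * ‖f 0‖ + K * (‖z.1‖ + ‖z.2‖)
  have hw : MemLp w 2 γ := by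
    have h₁ : MemLp (fun z : E × E => ‖z.1‖) 2 γ :=
      (memLp_two_iff_integrable_sq (by fun_prop)).2 (hμ.comp_fst_of_map_fst hfst)
    have h₂ : MemLp (fun z : E × E => ‖z.2‖) 2 γ :=
      (memLp_two_iff_integrable_sq (by fun_prop)).2 (hν.comp_snd_of_map_snd hsnd)
    exact (memLp_const (2 * ‖f 0‖)).add ((h₁.add h₂).const_mul (K : ℝ))
  have hd : MemLp (fun z : E × E => dist z.1 z.2) 2 γ :=
    (memLp_two_iff_integrable_sq (by fun_prop)).2
      (integrable_dist_sq_of_coupling hfst hsnd hμ hν)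
  have hfμ := hf.integrable_sq_norm_comp hμ
  have hfν := hf.integrable_sq_norm_comp hν
  have hfγ₁ := hfμ.comp_fst_of_map_fst hfst
  have hfγ₂ := hfν.comp_snd_of_map_snd hsnd
  calc ∫ x, ‖f x‖ ^ 2 ∂ν - ∫ x, ‖f x‖ ^ 2 ∂μ = ∫ z, (‖f z.2‖ ^ 2 - ‖f z.1‖ ^ 2) ∂γ := by
        rw [integral_sub hfγ₂ hfγ₁, integral_comp_fst_of_map_fst hfst hfμ.1,
          integral_comp_snd_of_map_snd hsnd hfν.1]
    _ ≤ ∫ z, K * (w z * dist z.1 z.2) ∂γ := by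
        refine integral_mono (hfγ₂.sub hfγ₁) ((hw.integrable_mul hd).const_mul _) fun z => ?_
        simpa only [dist_eq_norm] using hf.sq_norm_sub_sq_norm_le z.1 z.2
    _ = K * ∫ z, w z * dist z.1 z.2 ∂γ := integral_const_mul _ _
    _ ≤ K * (√(∫ z, w z ^ 2 ∂γ) * √(∫ z, dist z.1 z.2 ^ 2 ∂γ)) := by
        gcongr
        exact integral_mul_le_sqrt_mul_sqrt (ae_of_all _ fun z => by positivity)
          (ae_of_all _ fun z => dist_nonneg) hw hd
    _ ≤ K * (√(4 * K ^ 2 * (∫ x, ‖x‖ ^ 2 ∂μ + ∫ x, ‖x‖ ^ 2 ∂ν) + 8 * ‖f 0‖ ^ 2) *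
          √(∫ z, dist z.1 z.2 ^ 2 ∂γ)) := by
        gcongr
        exact integral_sq_affine_norm_le hfst hsnd hμ hν _ _
    _ = _ := by ring

end Coupling

section Wasserstein

variable {X : Type*} [MeasurableSpace X]

lemma lintegral_edist_sq_eq_ofReal_integral [PseudoMetricSpace X] {γ : Measure (X × X)}
    (hγ : Integrable (fun z => dist z.1 z.2 ^ 2) γ) :
    ∫⁻ z, edist z.1 z.2 ^ 2 ∂γ = ENNReal.ofReal (∫ z, dist z.1 z.2 ^ 2 ∂γ) := by
  rw [ofReal_integral_eq_lintegral_ofReal hγ (ae_of_all _ fun z => by positivity)]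
  refine lintegral_congr fun z => ?_
  rw [edist_dist, ENNReal.ofReal_pow dist_nonneg]

lemma le_mul_wasserstein2 [PseudoEMetricSpace X] {μ ν : Measure X} {D A : ℝ} (hA : 0 ≤ A)
    (hfin : ∃ γ : Measure (X × X), γ.map Prod.fst = μ ∧ γ.map Prod.snd = ν ∧
      ∫⁻ z, edist z.1 z.2 ^ 2 ∂γ ≠ ∞)
    (hbound : ∀ γ : Measure (X × X), γ.map Prod.fst = μ → γ.map Prod.snd = ν →
      ∫⁻ z, edist z.1 z.2 ^ 2 ∂γ ≠ ∞ → D ≤ A * √(∫⁻ z, edist z.1 z.2 ^ 2 ∂γ).toReal) :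
    D ≤ A * wasserstein2 μ ν := by
  rcases le_or_gt D 0 with hD | hD
  · exact hD.trans (mul_nonneg hA (Real.sqrt_nonneg _))
  obtain ⟨γ₀, hfst₀, hsnd₀, hcost₀⟩ := hfin
  have hA' : 0 < A :=
    pos_of_mul_pos_left (hD.trans_le (hbound γ₀ hfst₀ hsnd₀ hcost₀)) (Real.sqrt_nonneg _)
  set W := ⨅ γ ∈ {γ : Measure (X × X) | γ.map Prod.fst = μ ∧ γ.map Prod.snd = ν},
    ∫⁻ z, edist z.1 z.2 ^ 2 ∂γ
  have hW : W ≠ ∞ := ne_top_of_le_ne_top hcost₀ (iInf₂_le γ₀ ⟨hfst₀, hsnd₀⟩)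
  have hDA : 0 ≤ D / A := div_nonneg hD.le hA'.le
  -- `D ≤ A √c` for every coupling cost `c` means `(D / A)² ≤ c`, which passes to the infimum.
  have hle : ENNReal.ofReal ((D / A) ^ 2) ≤ W := by
    refine le_iInf₂ fun γ hγ => ?_
    obtain ⟨hfst, hsnd⟩ := hγ
    by_cases hcost : ∫⁻ z, edist z.1 z.2 ^ 2 ∂γ = ∞
    · simp [hcost]
    rw [← ENNReal.ofReal_toReal hcost]
    refine ENNReal.ofReal_le_ofReal ?_
    rw [← Real.le_sqrt hDA ENNReal.toReal_nonneg, div_le_iff₀' hA']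
    exact hbound γ hfst hsnd hcost
  have hsqrt := (Real.le_sqrt hDA ENNReal.toReal_nonneg).2
    ((ENNReal.ofReal_le_iff_le_toReal hW).1 hle)
  exact (div_le_iff₀' hA').1 hsqrt

end Wasserstein

theorem w2_distribution_shift_general
    {U Y : Type*}
    [NormedAddCommGroup U]
    [SecondCountableTopology U] [MeasurableSpace U] [BorelSpace U]
    [NormedAddCommGroup Y]
    (G1 G2 : U → Y) (K1 K2 : NNReal)
    (h1 : LipschitzWith K1 G1) (h2 : LipschitzWith K2 G2)
    (C : ℝ) (hC : C = (K1 : ℝ) + (K2 : ℝ))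
    (μ μ' : Measure U) [IsProbabilityMeasure μ] [IsProbabilityMeasure μ']
    (hm : Integrable (fun u => ‖u‖ ^ 2) μ) (hm' : Integrable (fun u => ‖u‖ ^ 2) μ') :
    ∫ u', ‖G1 u' - G2 u'‖ ^ 2 ∂μ' ≤
      ∫ u, ‖G1 u - G2 u‖ ^ 2 ∂μ +
        C * Real.sqrt (4 * C ^ 2 * ((∫ u, ‖u‖ ^ 2 ∂μ) + ∫ u, ‖u‖ ^ 2 ∂μ') +
            16 * ‖G1 0‖ ^ 2 + 16 * ‖G2 0‖ ^ 2) * wasserstein2 μ μ' := by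
  have hG : LipschitzWith (K1 + K2) (fun u => G1 u - G2 u) := h1.sub h2
  have hG0 : 8 * ‖G1 0 - G2 0‖ ^ 2 ≤ 16 * ‖G1 0‖ ^ 2 + 16 * ‖G2 0‖ ^ 2 := by
    nlinarith [norm_sub_le (G1 0) (G2 0), norm_nonneg (G1 0 - G2 0),
      sq_nonneg (‖G1 0‖ - ‖G2 0‖)]
  have hcost_prod : ∫⁻ z, edist z.1 z.2 ^ 2 ∂(μ.prod μ') ≠ ∞ := by
    rw [lintegral_edist_sq_eq_ofReal_integral
      (integrable_dist_sq_of_coupling (by simp) (by simp) hm hm')]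
    exact ENNReal.ofReal_ne_top
  rw [← sub_le_iff_le_add']
  refine le_mul_wasserstein2 (by rw [hC]; positivity)
    ⟨μ.prod μ', by simp, by simp, hcost_prod⟩ fun γ hfst hsnd _ => ?_
  rw [lintegral_edist_sq_eq_ofReal_integral (integrable_dist_sq_of_coupling hfst hsnd hm hm'),
    ENNReal.toReal_ofReal (integral_nonneg fun z => by positivity)]
  refine (hG.integral_sq_norm_sub_le_of_coupling hfst hsnd hm hm').trans ?_
  rw [hC]
  push_cast
  gcongr _ * √?_ * _
  linarith

/-- distribution shift bound in the `W₂` metric for Lipschitz maps between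
real separable Hilbert spaces, for probability measures with finite second moments. -/
theorem w2_distribution_shift
    {U Y : Type*}
    [NormedAddCommGroup U] [InnerProductSpace ℝ U] [CompleteSpace U]
    [SecondCountableTopology U] [MeasurableSpace U] [BorelSpace U]
    [NormedAddCommGroup Y] [InnerProductSpace ℝ Y] [CompleteSpace Y]
    [SecondCountableTopology Y]
    (G1 G2 : U → Y) (K1 K2 : NNReal)
    (h1 : LipschitzWith K1 G1) (h2 : LipschitzWith K2 G2)
    (C : ℝ) (hC : C = (K1 : ℝ) + (K2 : ℝ))
    (μ μ' : Measure U) [IsProbabilityMeasure μ] [IsProbabilityMeasure μ']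
    (hm : Integrable (fun u => ‖u‖ ^ 2) μ) (hm' : Integrable (fun u => ‖u‖ ^ 2) μ') :
    ∫ u', ‖G1 u' - G2 u'‖ ^ 2 ∂μ' ≤
      ∫ u, ‖G1 u - G2 u‖ ^ 2 ∂μ +
        C * Real.sqrt (4 * C ^ 2 * ((∫ u, ‖u‖ ^ 2 ∂μ) + ∫ u, ‖u‖ ^ 2 ∂μ') +
            16 * ‖G1 0‖ ^ 2 + 16 * ‖G2 0‖ ^ 2) * wasserstein2 μ μ' :=
  w2_distribution_shift_general G1 G2 K1 K2 h1 h2 C hC μ μ' hm hm'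
end

section
/- With A = C₁^{-1/2}(C₁^{1/2} C₂ C₁^{1/2})^{1/2} C₁^{-1/2} for symmetric positive definite matrices C₁, C₂ on ℝ^d, the matrix A is symmetric positive definite and satisfies A C₁ A = C₂. -/
open Matrix

noncomputable def Matrix.PosSemidef.sqrt {n 𝕜 : Type*} [Fintype n] [DecidableEq n] [RCLike 𝕜]
    [PartialOrder 𝕜]    {A : Matrix n n 𝕜} (hA : A.PosSemidef) : Matrix n n 𝕜 :=
  hA.1.eigenvectorUnitary.1 * diagonal ((↑) ∘ Real.sqrt ∘ hA.1.eigenvalues) *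
  (star hA.1.eigenvectorUnitary : Matrix n n 𝕜)

private lemma aux_sqrt_psd {d : ℕ} {A : Matrix (Fin d) (Fin d) ℝ} (hA : A.PosSemidef) :
    hA.sqrt.PosSemidef := by
  unfold Matrix.PosSemidef.sqrt
  have hD : (diagonal (RCLike.ofReal ∘ Real.sqrt ∘ hA.1.eigenvalues) : Matrix (Fin d) (Fin d) ℝ).PosSemidef :=
    posSemidef_diagonal_iff.mpr (fun i => by simp [Real.sqrt_nonneg])
  have := hD.mul_mul_conjTranspose_same (hA.1.eigenvectorUnitary : Matrix (Fin d) (Fin d) ℝ)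
  convert this using 1
  rfl

private lemma aux_sqrt_mul_self {d : ℕ} {A : Matrix (Fin d) (Fin d) ℝ} (hA : A.PosSemidef) :
    hA.sqrt * hA.sqrt = A := by
  unfold Matrix.PosSemidef.sqrt
  have hU : (star hA.1.eigenvectorUnitary : Matrix (Fin d) (Fin d) ℝ) *
      (hA.1.eigenvectorUnitary : Matrix (Fin d) (Fin d) ℝ) = 1 := by
    simp
  have hDD : (diagonal (RCLike.ofReal ∘ Real.sqrt ∘ hA.1.eigenvalues) : Matrix (Fin d) (Fin d) ℝ) *
      diagonal (RCLike.ofReal ∘ Real.sqrt ∘ hA.1.eigenvalues) = diagonal (RCLike.ofReal ∘ hA.1.eigenvalues) := by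
    rw [diagonal_mul_diagonal]
    congr 1; funext i
    simp [Real.mul_self_sqrt (hA.eigenvalues_nonneg i)]
  have hs := hA.1.spectral_theorem
  rw [Unitary.conjStarAlgAut_apply] at hs
  conv_rhs => rw [hs]
  calc _ = (hA.1.eigenvectorUnitary : Matrix (Fin d) (Fin d) ℝ) *
      diagonal (RCLike.ofReal ∘ Real.sqrt ∘ hA.1.eigenvalues) *
      ((star hA.1.eigenvectorUnitary : Matrix (Fin d) (Fin d) ℝ) *
      (hA.1.eigenvectorUnitary : Matrix (Fin d) (Fin d) ℝ)) *
      diagonal (RCLike.ofReal ∘ Real.sqrt ∘ hA.1.eigenvalues) *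
      (star hA.1.eigenvectorUnitary : Matrix (Fin d) (Fin d) ℝ) := by
        simp only [Matrix.mul_assoc]
    _ = _ := by
        rw [hU, Matrix.mul_one, Matrix.mul_assoc _ (diagonal _) (diagonal _), hDD]

private lemma aux_posDef_of_det_ne_zero {n : Type*} [Fintype n] [DecidableEq n]
    {B : Matrix n n ℝ} (hB : B.PosSemidef) (h : B.det ≠ 0) : B.PosDef := by
  exact hB.posDef_iff_det_ne_zero.mpr h

private lemma aux_sq_det_ne_zero {n : Type*} [Fintype n] [DecidableEq n]
    {B C : Matrix n n ℝ} (hBC : B * B = C) (hC : C.det ≠ 0) : B.det ≠ 0 := by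
  intro h
  apply hC
  rw [← hBC, det_mul, h, mul_zero]

private lemma aux_main {n : Type*} [Fintype n] [DecidableEq n]
    (S T C₁ C₂ : Matrix n n ℝ) (hSpsd : S.PosSemidef) (hTpsd : T.PosSemidef)
    (hS2 : S * S = C₁) (hT2 : T * T = S * C₂ * S)
    (h1 : C₁.PosDef) (h2 : C₂.PosDef) :
    (S⁻¹ * T * S⁻¹).PosDef ∧ S⁻¹ * T * S⁻¹ * C₁ * (S⁻¹ * T * S⁻¹) = C₂ := by
  have hdetS : S.det ≠ 0 := aux_sq_det_ne_zero hS2 h1.det_pos.ne'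
  have hSpd : S.PosDef := aux_posDef_of_det_ne_zero hSpsd hdetS
  have hSinv_pd : (S⁻¹).PosDef := hSpd.inv
  have hSinvH : (S⁻¹)ᴴ = S⁻¹ := hSinv_pd.1
  have hdetM : (S * C₂ * S).det ≠ 0 := by
    rw [det_mul, det_mul]
    exact mul_ne_zero (mul_ne_zero hdetS h2.det_pos.ne') hdetS
  have hdetT : T.det ≠ 0 := aux_sq_det_ne_zero hT2 hdetM
  have hdetSinv : (S⁻¹).det ≠ 0 := by
    rw [det_nonsing_inv]
    simpa using hdetS
  have hApsd : (S⁻¹ * T * S⁻¹).PosSemidef := by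
    have h' := hTpsd.mul_mul_conjTranspose_same S⁻¹
    rwa [hSinvH] at h'
  have hdetA : (S⁻¹ * T * S⁻¹).det ≠ 0 := by
    rw [det_mul, det_mul]
    exact mul_ne_zero (mul_ne_zero hdetSinv hdetT) hdetSinv
  refine ⟨aux_posDef_of_det_ne_zero hApsd hdetA, ?_⟩
  have hSu : IsUnit S.det := isUnit_iff_ne_zero.mpr hdetS
  have hinvS : S⁻¹ * S = 1 := nonsing_inv_mul S hSu
  have hSinv' : S * S⁻¹ = 1 := mul_nonsing_inv S hSu
  rw [← hS2]
  calc S⁻¹ * T * S⁻¹ * (S * S) * (S⁻¹ * T * S⁻¹)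
      = S⁻¹ * T * ((S⁻¹ * S) * (S * S⁻¹)) * T * S⁻¹ := by
        simp only [Matrix.mul_assoc]
    _ = S⁻¹ * (T * T) * S⁻¹ := by
        rw [hinvS, hSinv']
        simp only [Matrix.mul_assoc, Matrix.one_mul, Matrix.mul_one]
    _ = (S⁻¹ * S) * C₂ * (S * S⁻¹) := by
        rw [hT2]; simp only [Matrix.mul_assoc]
    _ = C₂ := by rw [hinvS, hSinv', Matrix.one_mul, Matrix.mul_one]

/-- with `A = C₁^{-1/2} (C₁^{1/2} C₂ C₁^{1/2})^{1/2} C₁^{-1/2}` for symmetric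
positive definite matrices `C₁, C₂`, the matrix `A` is symmetric positive definite and
satisfies `A C₁ A = C₂`. -/
theorem gaussian_transport_matrix
    {d : ℕ} (C₁ C₂ : Matrix (Fin d) (Fin d) ℝ)
    (h1 : C₁.PosDef) (h2 : C₂.PosDef)
    (hmid : (h1.posSemidef.sqrt * C₂ * h1.posSemidef.sqrt).PosSemidef)
    (A : Matrix (Fin d) (Fin d) ℝ)
    (hA : A = (h1.posSemidef.sqrt)⁻¹ * hmid.sqrt * (h1.posSemidef.sqrt)⁻¹) :
    A.PosDef ∧ A * C₁ * A = C₂ := by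
  rw [hA]
  exact aux_main _ _ _ _ (aux_sqrt_psd h1.posSemidef) (aux_sqrt_psd hmid)
    (aux_sqrt_mul_self h1.posSemidef) (aux_sqrt_mul_self hmid) h1 h2
end
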